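/- With the setup of the alternating cycle γ between two non-crossing partitions p and q of [l]: if x and y lie in the same block of p and that block is not one of the p-blocks used by γ, then the number of cycle labels (points of γ) strictly between x and y is even. -/
import Mathlib


/-- In the setting of an alternating cycle `γ` between two non-crossing partitions of
`{1,…,l}` (blocks given by the fibers of `bp` and `bq`): if `x` and `y` lie in the same
`p`-block and that block is not used by `γ`, then the number of labels of `γ` strictly
between `x` and `y` is even. -/
theorem stmt13 {α β : Type*} (l t : ℕ) (ht : 2 ≤ t)
    (bp : ℕ → α) (bq : ℕ → β)
    (hncp : ∀ a b c d : ℕ, a ∈ Finset.Icc 1 l → b ∈ Finset.Icc 1 l →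
      c ∈ Finset.Icc 1 l → d ∈ Finset.Icc 1 l → a < b → b < c → c < d →
      bp a = bp c → bp b = bp d → bp a = bp b)
    (hncq : ∀ a b c d : ℕ, a ∈ Finset.Icc 1 l → b ∈ Finset.Icc 1 l →
      c ∈ Finset.Icc 1 l → d ∈ Finset.Icc 1 l → a < b → b < c → c < d →
      bq a = bq c → bq b = bq d → bq a = bq b)
    (i : ℕ → ℕ)
    (hlab : ∀ n, i n ∈ Finset.Icc 1 l)
    (hper : ∀ n, i (n + 2 * t) = i n)
    (hinj : ∀ a < 2 * t, ∀ b < 2 * t, i a = i b → a = b)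
    (halt : ∀ k, bp (i (2 * k)) = bp (i (2 * k + 1)) ∧
      bq (i (2 * k + 1)) = bq (i (2 * k + 2)))
    (hpdist : ∀ k < t, ∀ k' < t, k ≠ k' → bp (i (2 * k)) ≠ bp (i (2 * k')))
    (hqdist : ∀ k < t, ∀ k' < t, k ≠ k' → bq (i (2 * k + 1)) ≠ bq (i (2 * k' + 1)))
    (x y : ℕ) (hx : x ∈ Finset.Icc 1 l) (hy : y ∈ Finset.Icc 1 l)
    (hxy : bp x = bp y)
    (hnotused : ∀ k < t, bp x ≠ bp (i (2 * k))) :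
    Even ((((Finset.range (2 * t)).image i) ∩ Finset.Ioo (min x y) (max x y)).card) := by

  rcases eq_or_ne x y with rfl | hne
  · simp
  have hu : min x y ∈ Finset.Icc 1 l := by
    rcases le_total x y with h | h
    · simpa [min_eq_left h] using hx
    · simpa [min_eq_right h] using hy
  have hv : max x y ∈ Finset.Icc 1 l := by
    rcases le_total x y with h | h
    · simpa [max_eq_right h] using hy
    · simpa [max_eq_left h] using hx
  have hbuv : bp (min x y) = bp (max x y) := by
    rcases le_total x y with h | h
    · simpa [min_eq_left h, max_eq_right h] using hxy
    · simpa [min_eq_right h, max_eq_left h] using hxy.symm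
  have hbu : ∀ k < t, bp (min x y) ≠ bp (i (2 * k)) := by
    intro k hk
    rcases le_total x y with h | h
    · simpa [min_eq_left h] using hnotused k hk
    · rw [min_eq_right h, ← hxy]; exact hnotused k hk
  set u := min x y with hudef
  set v := max x y with hvdef
  have main : ∀ k < t, ∀ a b : ℕ, a ∈ Finset.Icc 1 l → b ∈ Finset.Icc 1 l → a ≠ b →
      bp a = bp b → bp a = bp (i (2 * k)) → a ∈ Finset.Ioo u v → b ∈ Finset.Ioo u v := by
    intro k hk a b ha hb hneq habk hak hain
    have hbua : bp u ≠ bp a := fun h => hbu k hk (h.trans hak)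
    simp only [Finset.mem_Ioo] at hain ⊢
    by_contra hcon
    push_neg at hcon
    have hbne_u : b ≠ u := by
      intro h
      exact hbua (by rw [← h]; exact habk.symm)
    have hbne_v : b ≠ v := by
      intro h
      exact hbua (hbuv.trans (by rw [← h]; exact habk.symm))
    have hbcase : b < u ∨ v < b := by omega
    rcases hbcase with hcase | hcase
    · -- b < u < a < v : crossing b, u, a, v
      have := hncp b u a v hb hu ha hv hcase hain.1 hain.2 habk.symm hbuv
      exact hbua (this.symm.trans habk.symm)
    · -- u < a < v < b : crossing u, a, v, b
      have := hncp u a v b hu ha hv hb hain.1 hain.2 hcase hbuv habk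
      exact hbua this
  have key : ∀ k < t, (i (2 * k) ∈ Finset.Ioo u v ↔ i (2 * k + 1) ∈ Finset.Ioo u v) := by
    intro k hk
    have hab : bp (i (2 * k)) = bp (i (2 * k + 1)) := (halt k).1
    have hne' : i (2 * k) ≠ i (2 * k + 1) := by
      intro h
      have := hinj (2 * k) (by omega) (2 * k + 1) (by omega) h
      omega
    constructor
    · exact main k hk _ _ (hlab _) (hlab _) hne' hab rfl
    · exact main k hk _ _ (hlab _) (hlab _) hne'.symm hab.symm hab.symm
  set K := (Finset.range t).filter (fun k => i (2 * k) ∈ Finset.Ioo u v) with hK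
  have hT : ((Finset.range (2 * t)).image i) ∩ Finset.Ioo u v
      = K.image (fun k => i (2 * k)) ∪ K.image (fun k => i (2 * k + 1)) := by
    ext z
    simp only [hK, Finset.mem_inter, Finset.mem_image, Finset.mem_union, Finset.mem_filter,
      Finset.mem_range]
    constructor
    · rintro ⟨⟨m, hm, rfl⟩, hz⟩
      rcases Nat.even_or_odd m with ⟨k, hk⟩ | ⟨k, hk⟩
      · left
        refine ⟨k, ⟨by omega, ?_⟩, by rw [show 2 * k = m by omega]⟩
        rw [show 2 * k = m by omega]; exact hz
      · right
        refine ⟨k, ⟨by omega, ?_⟩, by rw [show 2 * k + 1 = m by omega]⟩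
        rw [key k (by omega), show 2 * k + 1 = m by omega]; exact hz
    · rintro (⟨k, ⟨hk, hzin⟩, rfl⟩ | ⟨k, ⟨hk, hzin⟩, rfl⟩)
      · exact ⟨⟨2 * k, by omega, rfl⟩, hzin⟩
      · exact ⟨⟨2 * k + 1, by omega, rfl⟩, (key k hk).mp hzin⟩
  have hmemK : ∀ k ∈ K, k < t := by
    intro k hk
    simp only [hK, Finset.mem_filter, Finset.mem_range] at hk
    exact hk.1
  have hinj1 : Set.InjOn (fun k => i (2 * k)) K := by
    intro a ha b hb h
    have := hinj (2 * a) (by have := hmemK a ha; omega) (2 * b) (by have := hmemK b hb; omega) h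
    omega
  have hinj2 : Set.InjOn (fun k => i (2 * k + 1)) K := by
    intro a ha b hb h
    have := hinj (2 * a + 1) (by have := hmemK a ha; omega) (2 * b + 1)
      (by have := hmemK b hb; omega) h
    omega
  have hdisj : Disjoint (K.image (fun k => i (2 * k))) (K.image (fun k => i (2 * k + 1))) := by
    rw [Finset.disjoint_left]
    rintro z hz1 hz2
    simp only [Finset.mem_image] at hz1 hz2
    obtain ⟨a, ha, rfl⟩ := hz1
    obtain ⟨b, hb, h⟩ := hz2
    have := hinj (2 * b + 1) (by have := hmemK b hb; omega) (2 * a)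
      (by have := hmemK a ha; omega) h
    omega
  rw [hT, Finset.card_union_of_disjoint hdisj, Finset.card_image_of_injOn hinj1,
    Finset.card_image_of_injOn hinj2]
  exact Even.add_self _
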